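/- arXiv:math/0411082 — 2 statements merged into one kernel-verified Lean document; each statement's English description precedes it below -/
import Mathlib

section
/- (Theorem 2, coefficient form.) Let H(x,y) = ((1−x)²(1−y)²(1−x²)(1−y²)(1−xy)²(1−x²y)(1−xy²))^{-1} ∈ ℚ[[x,y]] and let W(t,v) = (h₃(v)t³+h₂(v)t²+h₁(v)t+h₀(v))·((1−v)⁷(1+v)⁴(1+v²)(1−t)³(1+t)(1−vt))^{-1} ∈ ℚ[[t,v]], where h₃(v) = v²(v⁴−v³+3v²−v+1), h₂(v) = v(2v⁴−4v³+v²−v−1), h₁(v) = v(−v⁴−v³+v²−4v+2), h₀(v) = v⁴−v³+3v²−v+1. Then for all integers λ1 ≥ λ2 ≥ 0, the coefficient of t^{λ1−λ2}v^{λ2} in W equals (coefficient of x^{λ1}y^{λ2} in H) − (coefficient of x^{λ1+1}y^{λ2−1} in H), where the second term is 0 when λ2 = 0. (That is, W is the multiplicity series of the Hilbert series of the mixed trace algebra T₂ of two generic 3×3 matrices.) -/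
open Finset

abbrev Q2 : Type := MvPowerSeries (Fin 2) ℚ

noncomputable def Xv (i : Fin 2) : Q2 := MvPowerSeries.X i

noncomputable def mon (i j : ℕ) : Fin 2 →₀ ℕ := Finsupp.single 0 i + Finsupp.single 1 j

noncomputable def c (i j : ℕ) (f : Q2) : ℚ := MvPowerSeries.coeff (mon i j) f

/-- Schur function S_{(l1,l2)}(x,y) for l1 ≥ l2. -/
noncomputable def schur (l1 l2 : ℕ) : Q2 :=
  (Xv 0 * Xv 1) ^ l2 * ∑ i ∈ range (l1 - l2 + 1), Xv 0 ^ i * Xv 1 ^ (l1 - l2 - i)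

/-- f = Σ_{l1 ≥ l2 ≥ 0} m(l1,l2) · S_{(l1,l2)}, expressed coefficientwise
(each coefficient receives only finitely many contributions, since `schur l1 l2`
is homogeneous of degree `l1 + l2`). -/
def IsSchurExpansion (m : ℕ → ℕ → ℚ) (f : Q2) : Prop :=
  ∀ i j : ℕ, c i j f =
    ∑ l1 ∈ range (i + j + 1), ∑ l2 ∈ range (l1 + 1), m l1 l2 * c i j (schur l1 l2)

/-- h(t,v) = Σ_{l1 ≥ l2 ≥ 0} m(l1,l2) t^{l1-l2} v^{l2}, the multiplicity series. -/
def IsMultSeries (m : ℕ → ℕ → ℚ) (h : Q2) : Prop :=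
  ∀ p q : ℕ, c p q h = m (p + q) q

/-- Substitution of φ0, φ1 (series with zero constant term) for the two variables of h:
the coefficient of a monomial e in h(φ0,φ1) only receives contributions from monomials
t^p v^q of h with p + q ≤ |e|. -/
noncomputable def subst2 (φ0 φ1 h : Q2) : Q2 :=
  fun e => ∑ p ∈ range (e 0 + e 1 + 1), ∑ q ∈ range (e 0 + e 1 + 1),
    MvPowerSeries.coeff (mon p q) h * MvPowerSeries.coeff e (φ0 ^ p * φ1 ^ q)

/-- Substitution of a series φ with zero constant term into a one-variable series a. -/
noncomputable def substP (φ : Q2) (a : PowerSeries ℚ) : Q2 :=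
  fun e => ∑ k ∈ range (e 0 + e 1 + 1),
    PowerSeries.coeff k a * MvPowerSeries.coeff e (φ ^ k)

/-- Hilbert series of the mixed trace algebra T₂ of two generic 3×3 matrices
(Berele–Stembridge), with x = Xv 0, y = Xv 1. -/
noncomputable def Hseries : Q2 :=
  ((1 - Xv 0) ^ 2 * (1 - Xv 1) ^ 2 * (1 - Xv 0 ^ 2) * (1 - Xv 1 ^ 2)
    * (1 - Xv 0 * Xv 1) ^ 2 * (1 - Xv 0 ^ 2 * Xv 1) * (1 - Xv 0 * Xv 1 ^ 2))⁻¹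

/-- W(t,v), the multiplicity series of Theorem 2, with t = Xv 0, v = Xv 1;
h₃(v) = v²(v⁴−v³+3v²−v+1), h₂(v) = v(2v⁴−4v³+v²−v−1),
h₁(v) = v(−v⁴−v³+v²−4v+2), h₀(v) = v⁴−v³+3v²−v+1. -/
noncomputable def Wseries : Q2 :=
  (Xv 1 ^ 2 * (Xv 1 ^ 4 - Xv 1 ^ 3 + 3 * Xv 1 ^ 2 - Xv 1 + 1) * Xv 0 ^ 3
    + Xv 1 * (2 * Xv 1 ^ 4 - 4 * Xv 1 ^ 3 + Xv 1 ^ 2 - Xv 1 - 1) * Xv 0 ^ 2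
    + Xv 1 * (-Xv 1 ^ 4 - Xv 1 ^ 3 + Xv 1 ^ 2 - 4 * Xv 1 + 2) * Xv 0
    + (Xv 1 ^ 4 - Xv 1 ^ 3 + 3 * Xv 1 ^ 2 - Xv 1 + 1))
  * ((1 - Xv 1) ^ 7 * (1 + Xv 1) ^ 4 * (1 + Xv 1 ^ 2)
      * (1 - Xv 0) ^ 3 * (1 + Xv 0) * (1 - Xv 1 * Xv 0))⁻¹

/-!
Substituting `(t, v) ↦ (x, xy)` sends `t ^ (λ₁ - λ₂) * v ^ λ₂` to `x ^ λ₁ * y ^ λ₂`, and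
`(t, v) ↦ (y, xy)` sends it to `x ^ λ₂ * y ^ λ₁`. By the bialternant formula
`(x - y) S_λ = x ^ (λ₁ + 1) y ^ λ₂ - x ^ λ₂ y ^ (λ₁ + 1)`, the theorem is the coefficient
form of `x W(x, xy) - y W(y, xy) = (x - y) H(x, y)`, which after clearing denominators is a
polynomial identity. Reading off the coefficient of `x ^ (λ₁ + 1) y ^ λ₂` gives the claim,
because `W(y, xy)` only has monomials `x ^ a y ^ b` with `a ≤ b`.
-/

open Function MvPowerSeries

namespace MvPowerSeries

variable {σ τ R : Type*} [CommSemiring R] {φ : (σ →₀ ℕ) →+ (τ →₀ ℕ)}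

variable (φ) in
/-- The substitution `X ^ m ↦ X ^ φ m`. -/
noncomputable def embDomainFun (f : MvPowerSeries σ R) : MvPowerSeries τ R :=
  extend φ (coeff · f) 0

lemma coeff_embDomainFun_apply (hφ : Injective φ) (f : MvPowerSeries σ R) (m : σ →₀ ℕ) :
    coeff (φ m) (embDomainFun φ f) = coeff m f :=
  hφ.extend_apply _ _ m

lemma coeff_embDomainFun_of_notMem_range (f : MvPowerSeries σ R) {n : τ →₀ ℕ}
    (hn : n ∉ Set.range φ) : coeff n (embDomainFun φ f) = 0 :=
  extend_apply' _ _ n hn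

lemma coeff_embDomainFun_mul_coeff_eq_zero (f g : MvPowerSeries σ R)
    {a b : τ →₀ ℕ} (h : a ∈ Set.range φ → b ∉ Set.range φ) :
    coeff a (embDomainFun φ f) * coeff b (embDomainFun φ g) = 0 := by
  by_cases ha : a ∈ Set.range φ
  · rw [coeff_embDomainFun_of_notMem_range _ (h ha), mul_zero]
  · rw [coeff_embDomainFun_of_notMem_range _ ha, zero_mul]

lemma embDomainFun_mul (hφ : Injective φ) (f g : MvPowerSeries σ R) :
    embDomainFun φ (f * g) = embDomainFun φ f * embDomainFun φ g := by
  classical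
  ext n
  rw [coeff_mul]
  by_cases hn : n ∈ Set.range φ
  · obtain ⟨m, rfl⟩ := hn
    rw [coeff_embDomainFun_apply hφ, coeff_mul]
    refine sum_of_injOn (Prod.map φ φ) (hφ.prodMap hφ).injOn ?_ ?_ ?_
    · intro p hp
      simp_all [HasAntidiagonal.mem_antidiagonal, ← map_add]
    · rintro ⟨a, b⟩ hab hnot
      refine coeff_embDomainFun_mul_coeff_eq_zero f g ?_
      rintro ⟨p, rfl⟩ ⟨q, rfl⟩
      rw [HasAntidiagonal.mem_antidiagonal, ← map_add, hφ.eq_iff] at hab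
      exact hnot ⟨(p, q), by simpa [HasAntidiagonal.mem_antidiagonal] using hab, rfl⟩
    · intro p _
      simp [coeff_embDomainFun_apply hφ]
  · rw [coeff_embDomainFun_of_notMem_range _ hn]
    refine (sum_eq_zero fun p hp => ?_).symm
    refine coeff_embDomainFun_mul_coeff_eq_zero f g ?_
    rintro ⟨a, ha⟩ ⟨b, hb⟩
    rw [HasAntidiagonal.mem_antidiagonal, ← ha, ← hb, ← map_add] at hp
    exact hn ⟨a + b, hp⟩

variable (φ) in
noncomputable def embDomain (hφ : Injective φ) : MvPowerSeries σ R →+* MvPowerSeries τ R where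
  toFun := embDomainFun φ
  map_zero' := by
    ext n
    by_cases hn : n ∈ Set.range φ
    · obtain ⟨m, rfl⟩ := hn
      simp [coeff_embDomainFun_apply hφ]
    · simp [coeff_embDomainFun_of_notMem_range _ hn]
  map_add' f g := by
    ext n
    by_cases hn : n ∈ Set.range φ
    · obtain ⟨m, rfl⟩ := hn
      simp [coeff_embDomainFun_apply hφ]
    · simp [coeff_embDomainFun_of_notMem_range _ hn]
  map_one' := by
    classical
    ext n
    by_cases hn : n ∈ Set.range φ
    · obtain ⟨m, rfl⟩ := hn
      simp [coeff_one, coeff_embDomainFun_apply hφ, hφ.eq_iff' (map_zero φ)]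
    · have : n ≠ 0 := fun h => hn ⟨0, by simp [h]⟩
      simp [coeff_embDomainFun_of_notMem_range _ hn, coeff_one, this]
  map_mul' := embDomainFun_mul hφ

lemma coeff_embDomain_apply (hφ : Injective φ) (f : MvPowerSeries σ R) (m : σ →₀ ℕ) :
    coeff (φ m) (embDomain φ hφ f) = coeff m f :=
  coeff_embDomainFun_apply hφ f m

lemma coeff_embDomain_of_notMem_range (hφ : Injective φ) (f : MvPowerSeries σ R)
    {n : τ →₀ ℕ} (hn : n ∉ Set.range φ) : coeff n (embDomain φ hφ f) = 0 :=
  coeff_embDomainFun_of_notMem_range f hn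

lemma embDomain_monomial (hφ : Injective φ) (m : σ →₀ ℕ) (r : R) :
    embDomain φ hφ (monomial m r) = monomial (φ m) r := by
  classical
  ext n
  by_cases hn : n ∈ Set.range φ
  · obtain ⟨k, rfl⟩ := hn
    simp [coeff_embDomain_apply hφ, coeff_monomial, hφ.eq_iff]
  · have : n ≠ φ m := fun h => hn ⟨m, h.symm⟩
    simp [coeff_embDomain_of_notMem_range hφ _ hn, coeff_monomial, this]

end MvPowerSeries

@[simp] lemma mon_apply_zero (i j : ℕ) : mon i j 0 = i := by simp [mon]

@[simp] lemma mon_apply_one (i j : ℕ) : mon i j 1 = j := by simp [mon]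

lemma fin_two_finsupp_ext {d e : Fin 2 →₀ ℕ} (h0 : d 0 = e 0) (h1 : d 1 = e 1) : d = e := by
  ext i
  fin_cases i <;> assumption

lemma monomial_mon (a b : ℕ) : monomial (mon a b) 1 = Xv 0 ^ a * Xv 1 ^ b := by
  rw [Xv, Xv, X_pow_eq, X_pow_eq, monomial_mul_monomial, one_mul, mon]

lemma c_sub (i j : ℕ) (f g : Q2) : c i j (f - g) = c i j f - c i j g :=
  map_sub _ f g

lemma c_Xv_zero_mul (i j : ℕ) (f : Q2) : c (i + 1) j (Xv 0 * f) = c i j f := by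
  have : mon (i + 1) j = Finsupp.single 0 1 + mon i j :=
    fin_two_finsupp_ext (by simp [add_comm]) (by simp)
  rw [c, this, Xv, X_def, coeff_add_monomial_mul, one_mul, c]

lemma c_Xv_one_mul (i j : ℕ) (f : Q2) : c i (j + 1) (Xv 1 * f) = c i j f := by
  have : mon i (j + 1) = Finsupp.single 1 1 + mon i j :=
    fin_two_finsupp_ext (by simp) (by simp [add_comm])
  rw [c, this, Xv, X_def, coeff_add_monomial_mul, one_mul, c]

lemma c_Xv_one_mul_zero (i : ℕ) (f : Q2) : c i 0 (Xv 1 * f) = 0 := by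
  rw [c, Xv, X_def, coeff_monomial_mul, if_neg]
  simp [Finsupp.single_le_iff]

/-- Exponent map of the substitution `(t, v) ↦ (x, xy)`; `expYXY` is the one of
`(t, v) ↦ (y, xy)`. -/
noncomputable def expXXY : (Fin 2 →₀ ℕ) →+ (Fin 2 →₀ ℕ) where
  toFun d := mon (d 0 + d 1) (d 1)
  map_zero' := fin_two_finsupp_ext (by simp) (by simp)
  map_add' d e := fin_two_finsupp_ext (by simp; ring) (by simp)

noncomputable def expYXY : (Fin 2 →₀ ℕ) →+ (Fin 2 →₀ ℕ) where
  toFun d := mon (d 1) (d 0 + d 1)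
  map_zero' := fin_two_finsupp_ext (by simp) (by simp)
  map_add' d e := fin_two_finsupp_ext (by simp) (by simp; ring)

lemma expXXY_apply (d : Fin 2 →₀ ℕ) : expXXY d = mon (d 0 + d 1) (d 1) := rfl

lemma expYXY_apply (d : Fin 2 →₀ ℕ) : expYXY d = mon (d 1) (d 0 + d 1) := rfl

lemma expXXY_injective : Injective expXXY := by
  intro d e h
  have h0 := congr($h 0)
  have h1 := congr($h 1)
  simp only [expXXY_apply, mon_apply_zero, mon_apply_one] at h0 h1
  exact fin_two_finsupp_ext (by omega) h1

lemma expYXY_injective : Injective expYXY := by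
  intro d e h
  have h0 := congr($h 0)
  have h1 := congr($h 1)
  simp only [expYXY_apply, mon_apply_zero, mon_apply_one] at h0 h1
  exact fin_two_finsupp_ext (by omega) h0

noncomputable def substXXY : Q2 →+* Q2 := embDomain expXXY expXXY_injective

noncomputable def substYXY : Q2 →+* Q2 := embDomain expYXY expYXY_injective

lemma substXXY_monomial_mon (a b : ℕ) :
    substXXY (monomial (mon a b) 1) = monomial (mon (a + b) b) 1 := by
  rw [substXXY, embDomain_monomial, expXXY_apply, mon_apply_zero, mon_apply_one]

lemma substYXY_monomial_mon (a b : ℕ) :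
    substYXY (monomial (mon a b) 1) = monomial (mon b (a + b)) 1 := by
  rw [substYXY, embDomain_monomial, expYXY_apply, mon_apply_zero, mon_apply_one]

lemma substXXY_Xv_zero : substXXY (Xv 0) = Xv 0 := by
  simpa [monomial_mon] using substXXY_monomial_mon 1 0

lemma substXXY_Xv_one : substXXY (Xv 1) = Xv 0 * Xv 1 := by
  simpa [monomial_mon] using substXXY_monomial_mon 0 1

lemma substYXY_Xv_zero : substYXY (Xv 0) = Xv 1 := by
  simpa [monomial_mon] using substYXY_monomial_mon 1 0

lemma substYXY_Xv_one : substYXY (Xv 1) = Xv 0 * Xv 1 := by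
  simpa [monomial_mon] using substYXY_monomial_mon 0 1

lemma c_substXXY (f : Q2) {i j : ℕ} (h : j ≤ i) : c i j (substXXY f) = c (i - j) j f := by
  have : mon i j = expXXY (mon (i - j) j) :=
    fin_two_finsupp_ext (by simp [expXXY_apply]; omega) (by simp [expXXY_apply])
  rw [c, this, substXXY, coeff_embDomain_apply, c]

lemma c_substYXY_of_lt (f : Q2) {i j : ℕ} (h : j < i) : c i j (substYXY f) = 0 := by
  refine coeff_embDomain_of_notMem_range _ f ?_
  rintro ⟨d, hd⟩
  have h0 := congr($hd 0)
  have h1 := congr($hd 1)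
  simp only [expYXY_apply, mon_apply_zero, mon_apply_one] at h0 h1
  omega

section

variable {R S : Type*} [CommRing R] [CommRing S]

def wNum (t v : R) : R :=
  v ^ 2 * (v ^ 4 - v ^ 3 + 3 * v ^ 2 - v + 1) * t ^ 3
    + v * (2 * v ^ 4 - 4 * v ^ 3 + v ^ 2 - v - 1) * t ^ 2
    + v * (-v ^ 4 - v ^ 3 + v ^ 2 - 4 * v + 2) * t
    + (v ^ 4 - v ^ 3 + 3 * v ^ 2 - v + 1)

def wDen (t v : R) : R :=
  (1 - v) ^ 7 * (1 + v) ^ 4 * (1 + v ^ 2) * (1 - t) ^ 3 * (1 + t) * (1 - v * t)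

def hDen (x y : R) : R :=
  (1 - x) ^ 2 * (1 - y) ^ 2 * (1 - x ^ 2) * (1 - y ^ 2)
    * (1 - x * y) ^ 2 * (1 - x ^ 2 * y) * (1 - x * y ^ 2)

lemma map_wNum (f : R →+* S) (t v : R) : f (wNum t v) = wNum (f t) (f v) := by
  simp [wNum, map_ofNat]

lemma map_wDen (f : R →+* S) (t v : R) : f (wDen t v) = wDen (f t) (f v) := by
  simp [wDen]

theorem wNum_wDen_hDen_identity (x y : R) :
    (x * wNum x (x * y) * wDen y (x * y) - y * wNum y (x * y) * wDen x (x * y)) * hDen x y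
      = (x - y) * (wDen x (x * y) * wDen y (x * y)) := by
  unfold wNum wDen hDen
  ring

lemma mul_sub_mul_eq_of_mul_wDen {x y a b h : R} (ha : a * wDen x (x * y) = wNum x (x * y))
    (hb : b * wDen y (x * y) = wNum y (x * y)) (hh : h * hDen x y = 1)
    (hu : IsUnit (wDen x (x * y) * wDen y (x * y))) :
    x * a - y * b = (x - y) * h := by
  refine hu.mul_right_cancel ?_
  linear_combination (x * wDen y (x * y)) * ha - (y * wDen x (x * y)) * hb
    - (x * wNum x (x * y) * wDen y (x * y) - y * wNum y (x * y) * wDen x (x * y)) * hh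
    + h * wNum_wDen_hDen_identity x y

end

lemma constantCoeff_wDen_Xv : constantCoeff (wDen (Xv 0) (Xv 1)) = 1 := by
  simp [Xv, wDen]

lemma constantCoeff_hDen_Xv : constantCoeff (hDen (Xv 0) (Xv 1)) = 1 := by
  simp [Xv, hDen]

lemma isUnit_wDen_Xv : IsUnit (wDen (Xv 0) (Xv 1)) := by
  simp [isUnit_iff_constantCoeff, constantCoeff_wDen_Xv]

lemma Wseries_mul_wDen : Wseries * wDen (Xv 0) (Xv 1) = wNum (Xv 0) (Xv 1) := by
  rw [show Wseries = wNum (Xv 0) (Xv 1) * (wDen (Xv 0) (Xv 1))⁻¹ from rfl, mul_assoc,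
    MvPowerSeries.inv_mul_cancel _ (by simp [constantCoeff_wDen_Xv]), mul_one]

lemma Hseries_mul_hDen : Hseries * hDen (Xv 0) (Xv 1) = 1 :=
  MvPowerSeries.inv_mul_cancel (hDen (Xv 0) (Xv 1)) (by simp [constantCoeff_hDen_Xv])

theorem Xv_mul_substXXY_sub_Xv_mul_substYXY :
    Xv 0 * substXXY Wseries - Xv 1 * substYXY Wseries = (Xv 0 - Xv 1) * Hseries := by
  refine mul_sub_mul_eq_of_mul_wDen ?_ ?_ Hseries_mul_hDen ?_
  · simpa [map_wNum, map_wDen, substXXY_Xv_zero, substXXY_Xv_one]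
      using congrArg substXXY Wseries_mul_wDen
  · simpa [map_wNum, map_wDen, substYXY_Xv_zero, substYXY_Xv_one]
      using congrArg substYXY Wseries_mul_wDen
  · simpa [map_wDen, substXXY_Xv_zero, substXXY_Xv_one, substYXY_Xv_zero, substYXY_Xv_one]
      using (isUnit_wDen_Xv.map substXXY).mul (isUnit_wDen_Xv.map substYXY)

/-- Theorem 2, coefficient form: the coefficient of t^{λ1−λ2}v^{λ2}
in W equals coeff_{x^{λ1}y^{λ2}}(H) − coeff_{x^{λ1+1}y^{λ2−1}}(H), i.e. W is the
multiplicity series of the Hilbert series of the mixed trace algebra T₂. -/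
theorem W_is_multiplicity_series_of_H_coefficientwise :
    ∀ l1 l2 : ℕ, l2 ≤ l1 →
      c (l1 - l2) l2 Wseries
        = c l1 l2 Hseries - (if l2 = 0 then 0 else c (l1 + 1) (l2 - 1) Hseries) := by
  intro l1 l2 hl
  have key := congrArg (c (l1 + 1) l2) Xv_mul_substXXY_sub_Xv_mul_substYXY
  rw [c_sub, sub_mul, c_sub, c_Xv_zero_mul, c_Xv_zero_mul, c_substXXY _ hl] at key
  rcases l2 with _ | k
  · rw [c_Xv_one_mul_zero, c_Xv_one_mul_zero] at key
    simpa using key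
  · rw [c_Xv_one_mul, c_Xv_one_mul, c_substYXY_of_lt _ (by omega)] at key
    simpa using key
end

section
/- (Theorem 2, identity form via equation (2).) Let H(x,y) = ((1−x)²(1−y)²(1−x²)(1−y²)(1−xy)²(1−x²y)(1−xy²))^{-1} ∈ ℚ[[x,y]] and let W(t,v) = (h₃(v)t³+h₂(v)t²+h₁(v)t+h₀(v))·((1−v)⁷(1+v)⁴(1+v²)(1−t)³(1+t)(1−vt))^{-1} ∈ ℚ[[t,v]], where h₃(v) = v²(v⁴−v³+3v²−v+1), h₂(v) = v(2v⁴−4v³+v²−v−1), h₁(v) = v(−v⁴−v³+v²−4v+2), h₀(v) = v⁴−v³+3v²−v+1. Then in ℚ[[x,y]]: (x − y)·H(x,y) = x·W(x,xy) − y·W(y,xy), where W(x,xy) and W(y,xy) denote substitution of t := x (resp. t := y) and v := xy into W. -/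
open Finset

/-!
Substituting series without constant term is a ring homomorphism (`MvPowerSeries.subst`), and
`subst2` computes it: `φ₀ ^ p * φ₁ ^ q` has order at least `p + q`, so truncating the sums at the
total degree of the monomial loses nothing. Applying the substitutions `(t, v) ↦ (x, xy)` and
`(t, v) ↦ (y, xy)` to `Wseries * denW = numW` and multiplying the claim by the three (invertible)
denominators leaves a polynomial identity in `x, y`.
-/

open MvPowerSeries

theorem MvPowerSeries.coeff_pow_mul_pow_eq_zero {σ R : Type*} [CommSemiring R]
    {f g : MvPowerSeries σ R} (hf : constantCoeff f = 0) (hg : constantCoeff g = 0)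
    {p q : ℕ} {e : σ →₀ ℕ} (he : e.degree < p + q) : coeff e (f ^ p * g ^ q) = 0 := by
  apply coeff_of_lt_order
  calc (e.degree : ℕ∞) < p + q := by exact_mod_cast he
    _ ≤ (f ^ p).order + (g ^ q).order :=
      add_le_add (le_order_pow_of_constantCoeff_eq_zero p hf)
        (le_order_pow_of_constantCoeff_eq_zero q hg)
    _ ≤ (f ^ p * g ^ q).order := le_order_mul

theorem sub_mul_eq_of_clear_denominators {R : Type*} [CommRing R]
    {x y D H E₁ E₂ N₁ N₂ S₁ S₂ : R}
    (hH : D * H = 1) (hE₁ : IsUnit E₁) (hE₂ : IsUnit E₂) (h₁ : S₁ * E₁ = N₁) (h₂ : S₂ * E₂ = N₂)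
    (key : (x - y) * E₁ * E₂ = (x * N₁ * E₂ - y * N₂ * E₁) * D) :
    (x - y) * H = x * S₁ - y * S₂ := by
  apply (hE₁.mul hE₂).mul_left_cancel
  linear_combination H * key + (x * N₁ * E₂ - y * N₂ * E₁) * hH - x * E₂ * h₁ + y * E₁ * h₂

@[simp]
theorem mon_apply_zero_s8 (p q : ℕ) : mon p q 0 = p := by
  simp [mon]

@[simp]
theorem mon_apply_one_s8 (p q : ℕ) : mon p q 1 = q := by
  simp [mon]

theorem mon_injective : Function.Injective fun pq : ℕ × ℕ => mon pq.1 pq.2 := by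
  intro a b h
  have h0 := congrArg (· 0) h
  have h1 := congrArg (· 1) h
  simp only [mon_apply_zero_s8, mon_apply_one_s8] at h0 h1
  exact Prod.ext h0 h1

theorem mon_apply_zero_apply_one (d : Fin 2 →₀ ℕ) : mon (d 0) (d 1) = d := by
  ext i
  fin_cases i <;> simp [mon]

theorem subst2_eq_subst {φ₀ φ₁ : Q2} (h₀ : constantCoeff φ₀ = 0) (h₁ : constantCoeff φ₁ = 0)
    (h : Q2) : subst2 φ₀ φ₁ h = subst ![φ₀, φ₁] h := by
  ext e
  have hφ : HasSubst ![φ₀, φ₁] :=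
    hasSubst_of_constantCoeff_zero (by simp [Fin.forall_fin_two, h₀, h₁])
  have hprod (d : Fin 2 →₀ ℕ) : d.prod (fun s n => ![φ₀, φ₁] s ^ n) = φ₀ ^ d 0 * φ₁ ^ d 1 := by
    rw [Finsupp.prod_fintype _ _ (by simp), Fin.prod_univ_two]
    rfl
  set N := e 0 + e 1 + 1
  have hsupp : (Function.support fun d => coeff d h • coeff e (d.prod fun s n => ![φ₀, φ₁] s ^ n))
      ⊆ ((range N ×ˢ range N).map ⟨_, mon_injective⟩ : Finset _) := by
    intro d hd
    rw [Function.mem_support, hprod] at hd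
    have hdeg : d 0 + d 1 ≤ e 0 + e 1 := by
      by_contra! hlt
      refine hd (smul_eq_zero_of_right _ (coeff_pow_mul_pow_eq_zero h₀ h₁ ?_))
      simpa [Finsupp.degree_eq_sum, Fin.sum_univ_two] using hlt
    simp only [coe_map, Function.Embedding.coeFn_mk, Set.mem_image, coe_product, coe_range,
      Set.mem_prod, Set.mem_Iio]
    exact ⟨(d 0, d 1), ⟨by omega, by omega⟩, mon_apply_zero_apply_one d⟩
  rw [coeff_subst hφ, finsum_eq_sum_of_support_subset _ hsupp, sum_map, sum_product]
  simp only [hprod, Function.Embedding.coeFn_mk, smul_eq_mul, mon_apply_zero_s8, mon_apply_one_s8]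
  rfl

section Factors

variable {R : Type*} [CommRing R]

def numW (t v : R) : R :=
  v ^ 2 * (v ^ 4 - v ^ 3 + 3 * v ^ 2 - v + 1) * t ^ 3
    + v * (2 * v ^ 4 - 4 * v ^ 3 + v ^ 2 - v - 1) * t ^ 2
    + v * (-v ^ 4 - v ^ 3 + v ^ 2 - 4 * v + 2) * t
    + (v ^ 4 - v ^ 3 + 3 * v ^ 2 - v + 1)

def denW (t v : R) : R :=
  (1 - v) ^ 7 * (1 + v) ^ 4 * (1 + v ^ 2) * (1 - t) ^ 3 * (1 + t) * (1 - v * t)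

def denH (x y : R) : R :=
  (1 - x) ^ 2 * (1 - y) ^ 2 * (1 - x ^ 2) * (1 - y ^ 2)
    * (1 - x * y) ^ 2 * (1 - x ^ 2 * y) * (1 - x * y ^ 2)

theorem map_numW {S : Type*} [CommRing S] (f : R →+* S) (t v : R) :
    f (numW t v) = numW (f t) (f v) := by
  simp [numW, map_ofNat]

theorem map_denW {S : Type*} [CommRing S] (f : R →+* S) (t v : R) :
    f (denW t v) = denW (f t) (f v) := by
  simp [denW]

theorem sub_mul_denW_mul_denW (x y : R) :
    (x - y) * denW x (x * y) * denW y (x * y)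
      = (x * numW x (x * y) * denW y (x * y) - y * numW y (x * y) * denW x (x * y)) * denH x y := by
  simp only [numW, denW, denH]
  ring

end Factors

section Units

variable {σ k : Type*} [Field k] {t v : MvPowerSeries σ k}

theorem isUnit_denW (ht : constantCoeff t = 0) (hv : constantCoeff v = 0) :
    IsUnit (denW t v) := by
  simp [isUnit_iff_constantCoeff, denW, ht, hv]

theorem isUnit_denH (ht : constantCoeff t = 0) (hv : constantCoeff v = 0) :
    IsUnit (denH t v) := by
  simp [isUnit_iff_constantCoeff, denH, ht, hv]

end Units

theorem constantCoeff_Xv (i : Fin 2) : constantCoeff (Xv i) = 0 := by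
  simp [Xv]

theorem Wseries_eq : Wseries = numW (Xv 0) (Xv 1) * (denW (Xv 0) (Xv 1))⁻¹ := rfl

theorem denH_mul_Hseries : denH (Xv 0) (Xv 1) * Hseries = 1 :=
  MvPowerSeries.mul_inv_cancel _
    (isUnit_iff_constantCoeff.mp (isUnit_denH (constantCoeff_Xv 0) (constantCoeff_Xv 1))).ne_zero

theorem Wseries_mul_denW : Wseries * denW (Xv 0) (Xv 1) = numW (Xv 0) (Xv 1) := by
  rw [Wseries_eq, mul_assoc,
    MvPowerSeries.inv_mul_cancel _
      (isUnit_iff_constantCoeff.mp (isUnit_denW (constantCoeff_Xv 0) (constantCoeff_Xv 1))).ne_zero,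
    mul_one]

theorem subst_Wseries_mul_denW {t v : Q2} (ht : constantCoeff t = 0) (hv : constantCoeff v = 0) :
    subst ![t, v] Wseries * denW t v = numW t v := by
  have hφ : HasSubst ![t, v] :=
    hasSubst_of_constantCoeff_zero (by simp [Fin.forall_fin_two, ht, hv])
  let ψ : Q2 →+* Q2 := (substAlgHom (R := ℚ) hφ).toRingHom
  have hψ (f : Q2) : ψ f = subst ![t, v] f := substAlgHom_apply hφ f
  have h₀ : ψ (Xv 0) = t := by rw [hψ, Xv, subst_X hφ]; rfl
  have h₁ : ψ (Xv 1) = v := by rw [hψ, Xv, subst_X hφ]; rfl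
  rw [← hψ, ← h₀, ← h₁, ← map_denW, ← map_numW, ← map_mul, Wseries_mul_denW]

/-- Theorem 2, identity form via equation (2):
(x − y)·H(x,y) = x·W(x,xy) − y·W(y,xy). -/
theorem W_is_multiplicity_series_of_H :
    (Xv 0 - Xv 1) * Hseries
      = Xv 0 * subst2 (Xv 0) (Xv 0 * Xv 1) Wseries
        - Xv 1 * subst2 (Xv 1) (Xv 0 * Xv 1) Wseries := by
  have hx := constantCoeff_Xv 0
  have hy := constantCoeff_Xv 1
  have hxy : constantCoeff (Xv 0 * Xv 1) = 0 := by simp [hx]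
  rw [subst2_eq_subst hx hxy, subst2_eq_subst hy hxy]
  exact sub_mul_eq_of_clear_denominators denH_mul_Hseries (isUnit_denW hx hxy)
    (isUnit_denW hy hxy) (subst_Wseries_mul_denW hx hxy) (subst_Wseries_mul_denW hy hxy)
    (sub_mul_denW_mul_denW (Xv 0) (Xv 1))
end
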